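/- arXiv:math/0411585 — 5 statements merged into one kernel-verified Lean document; each statement's English description precedes it below -/
import Mathlib

section
/- If metric spaces M₁ and M₂ are quasi-isometric, then asdim M₁ = asdim M₂. -/
/-- `AsdimLEWith d n` : the space has asymptotic dimension at most `n` with respect to the
distance function `d`: for every `r > 0` there is a cover by sets of uniformly bounded
diameter such that every ball of radius `r` meets at most `n + 1` members of the cover. -/
def AsdimLEWith {X : Type*} (d : X → X → ℝ) (n : ℕ) : Prop :=
  ∀ r : ℝ, 0 < r → ∃ (𝒰 : Set (Set X)) (D : ℝ),
    ⋃₀ 𝒰 = Set.univ ∧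
    (∀ U ∈ 𝒰, ∀ a ∈ U, ∀ b ∈ U, d a b ≤ D) ∧
    ∀ x : X, {U | U ∈ 𝒰 ∧ ∃ y ∈ U, d x y ≤ r}.Finite ∧
      {U | U ∈ 𝒰 ∧ ∃ y ∈ U, d x y ≤ r}.ncard ≤ n + 1

/-- `f : M₁ → M₂` is a quasi-isometry: a coarse bi-Lipschitz map with `ε`-dense image. -/
def IsQuasiIsometry {M₁ M₂ : Type*} [PseudoMetricSpace M₁] [PseudoMetricSpace M₂]
    (f : M₁ → M₂) : Prop :=
  ∃ (lam c ε : ℝ), 0 < lam ∧ 0 ≤ c ∧ 0 ≤ ε ∧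
    (∀ x y : M₁,
      (1 / lam) * dist (f x) (f y) - c ≤ dist x y ∧
        dist x y ≤ lam * dist (f x) (f y) + c) ∧
    ∀ z : M₂, ∃ x : M₁, dist (f x) z ≤ ε

private lemma asdim_key {lam c d e : ℝ} (hlam : 0 < lam) (h : (1 / lam) * d - c ≤ e) :
    d ≤ lam * (e + c) := by
  rw [one_div_mul_eq_div] at h
  have h2 : d / lam ≤ e + c := by linarith
  have := (div_le_iff₀ hlam).mp h2
  linarith [mul_comm (e + c) lam, this]

private lemma asdim_aux {X Y : Type*} [PseudoMetricSpace X] [PseudoMetricSpace Y] (n : ℕ)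
    (h : X → Y)
    (hlip : ∀ s : ℝ, 0 < s → ∃ s' : ℝ, 0 < s' ∧ ∀ x y : X, dist x y ≤ s →
      dist (h x) (h y) ≤ s')
    (hexp : ∀ D : ℝ, ∃ D' : ℝ, ∀ x y : X, dist (h x) (h y) ≤ D → dist x y ≤ D')
    (hY : AsdimLEWith (fun a b : Y => dist a b) n) :
    AsdimLEWith (fun a b : X => dist a b) n := by
  intro r hr
  obtain ⟨s', hs', hmap⟩ := hlip r hr
  obtain ⟨𝒰, D, hcov, hdiam, hmult⟩ := hY s' hs'
  obtain ⟨D', hD'⟩ := hexp D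
  refine ⟨(fun U => h ⁻¹' U) '' 𝒰, D', ?_, ?_, ?_⟩
  · ext x
    simp only [Set.mem_sUnion, Set.mem_univ, iff_true]
    have hx : h x ∈ ⋃₀ 𝒰 := by rw [hcov]; trivial
    obtain ⟨U, hU, hxU⟩ := hx
    exact ⟨h ⁻¹' U, ⟨U, hU, rfl⟩, hxU⟩
  · rintro V ⟨U, hU, rfl⟩ a ha b hb
    exact hD' a b (hdiam U hU _ ha _ hb)
  · intro x
    have hsub : {V | V ∈ (fun U => h ⁻¹' U) '' 𝒰 ∧ ∃ y ∈ V, dist x y ≤ r} ⊆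
        (fun U => h ⁻¹' U) '' {U | U ∈ 𝒰 ∧ ∃ y ∈ U, dist (h x) y ≤ s'} := by
      rintro V ⟨⟨U, hU, rfl⟩, y, hyV, hxy⟩
      exact ⟨U, ⟨hU, h y, hyV, hmap x y hxy⟩, rfl⟩
    have hfin := ((hmult (h x)).1).image (fun U => h ⁻¹' U)
    refine ⟨hfin.subset hsub, ?_⟩
    calc {V | V ∈ (fun U => h ⁻¹' U) '' 𝒰 ∧ ∃ y ∈ V, dist x y ≤ r}.ncard
        ≤ ((fun U => h ⁻¹' U) '' {U | U ∈ 𝒰 ∧ ∃ y ∈ U, dist (h x) y ≤ s'}).ncard :=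
          Set.ncard_le_ncard hsub hfin
      _ ≤ {U | U ∈ 𝒰 ∧ ∃ y ∈ U, dist (h x) y ≤ s'}.ncard :=
          Set.ncard_image_le (hmult (h x)).1
      _ ≤ n + 1 := (hmult (h x)).2

/-- Quasi-isometric metric spaces have the same asymptotic dimension. -/
theorem asdim_eq_of_quasiIsometric {M₁ M₂ : Type*} [PseudoMetricSpace M₁]
    [PseudoMetricSpace M₂] (h : ∃ f : M₁ → M₂, IsQuasiIsometry f) (n : ℕ) :
    AsdimLEWith (fun a b : M₁ => dist a b) n ↔ AsdimLEWith (fun a b : M₂ => dist a b) n := by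
  obtain ⟨f, lam, c, ε, hlam, hc, hε, hqi, hdense⟩ := h
  constructor
  · -- asdim M₁ ≤ n → asdim M₂ ≤ n, pull back along a coarse inverse g
    intro h1
    choose g hg using hdense
    refine asdim_aux n g ?_ ?_ h1
    · intro s hs
      refine ⟨lam * (s + 2 * ε) + c, by nlinarith, ?_⟩
      intro z w hzw
      have htri : dist (f (g z)) (f (g w)) ≤ s + 2 * ε := by
        calc dist (f (g z)) (f (g w)) ≤ dist (f (g z)) z + dist z (f (g w)) :=
              dist_triangle _ _ _
          _ ≤ dist (f (g z)) z + (dist z w + dist w (f (g w))) := by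
              linarith [dist_triangle z w (f (g w))]
          _ ≤ ε + (s + ε) := by
              have := hg z
              have := hg w
              have := dist_comm w (f (g w))
              linarith
          _ = s + 2 * ε := by ring
      calc dist (g z) (g w) ≤ lam * dist (f (g z)) (f (g w)) + c := (hqi (g z) (g w)).2
        _ ≤ lam * (s + 2 * ε) + c := by nlinarith
    · intro D
      refine ⟨lam * (D + c) + 2 * ε, ?_⟩
      intro z w hd
      have h2 : dist (f (g z)) (f (g w)) ≤ lam * (D + c) :=
        asdim_key hlam (le_trans (hqi (g z) (g w)).1 hd)
      calc dist z w ≤ dist z (f (g z)) + dist (f (g z)) w := dist_triangle _ _ _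
        _ ≤ dist z (f (g z)) + (dist (f (g z)) (f (g w)) + dist (f (g w)) w) := by
            linarith [dist_triangle (f (g z)) (f (g w)) w]
        _ ≤ ε + (lam * (D + c) + ε) := by
            have := hg z
            have := hg w
            have := dist_comm z (f (g z))
            linarith
        _ = lam * (D + c) + 2 * ε := by ring
  · -- asdim M₂ ≤ n → asdim M₁ ≤ n, pull back along f
    intro h2
    refine asdim_aux n f ?_ ?_ h2
    · intro s hs
      refine ⟨lam * (s + c), by nlinarith, ?_⟩
      intro x y hxy
      have := asdim_key hlam (hqi x y).1
      nlinarith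
    · intro D
      refine ⟨lam * D + c, ?_⟩
      intro x y hd
      have := (hqi x y).2
      nlinarith
end

section
/- If a metric space M is the union of two subsets M′ and M″, then asdim M = max{asdim M′, asdim M″}. -/
open Set

/-- `n+1` uniformly bounded families of subsets of `X`, each `s`-disjoint, covering `A`. -/
def ColoredOn {X : Type*} [PseudoMetricSpace X] (A : Set X) (n : ℕ) (s : ℝ) : Prop :=
  ∃ (𝒲 : Fin (n + 1) → Set (Set X)) (D : ℝ),
    (A ⊆ ⋃ i, ⋃₀ 𝒲 i) ∧
    (∀ i, ∀ W ∈ 𝒲 i, ∀ a ∈ W, ∀ b ∈ W, dist a b ≤ D) ∧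
    (∀ i, ∀ W ∈ 𝒲 i, ∀ W' ∈ 𝒲 i, W ≠ W' → ∀ a ∈ W, ∀ b ∈ W', s < dist a b)

lemma asdim_of_colored {X : Type*} [PseudoMetricSpace X] (n : ℕ)
    (h : ∀ s : ℝ, 0 < s → ColoredOn (Set.univ : Set X) n s) :
    AsdimLEWith (fun a b : X => dist a b) n := by
  classical
  intro r hr
  obtain ⟨𝒲, D, hcov, hbd, hdisj⟩ := h (2 * r + 1) (by linarith)
  refine ⟨⋃ i, 𝒲 i, D, ?_, ?_, ?_⟩
  · apply Set.eq_univ_of_univ_subset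
    intro x _
    obtain ⟨t, ⟨i, rfl⟩, W, hW, hxW⟩ := hcov (Set.mem_univ x)
    exact ⟨W, Set.mem_iUnion.2 ⟨i, hW⟩, hxW⟩
  · intro U hU
    obtain ⟨i, hUi⟩ := Set.mem_iUnion.1 hU
    exact hbd i U hUi
  · intro x
    set Mx : Set (Set X) := {U | U ∈ ⋃ i, 𝒲 i ∧ ∃ y ∈ U, dist x y ≤ r} with hMxdef
    set g : Set X → Fin (n + 1) := fun U =>
      if h : ∃ i, U ∈ 𝒲 i then h.choose else 0 with hgdef
    have hg : ∀ U, U ∈ ⋃ i, 𝒲 i → U ∈ 𝒲 (g U) := by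
      intro U hU
      have he : ∃ i, U ∈ 𝒲 i := Set.mem_iUnion.1 hU
      simp only [hgdef, dif_pos he]
      exact he.choose_spec
    have hinj : Set.InjOn g Mx := by
      intro U hU V hV hgeq
      by_contra hne
      obtain ⟨hUm, y, hy, hdy⟩ := hU
      obtain ⟨hVm, z, hz, hdz⟩ := hV
      have h1 := hdisj (g U) U (hg U hUm) V (by rw [hgeq]; exact hg V hVm) hne y hy z hz
      have : dist y z ≤ dist y x + dist x z := dist_triangle _ _ _
      rw [dist_comm y x] at this
      linarith
    have hfin : Mx.Finite := Set.Finite.of_finite_image (Set.toFinite _) hinj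
    refine ⟨hfin, ?_⟩
    calc Mx.ncard = (g '' Mx).ncard := (Set.ncard_image_of_injOn hinj).symm
      _ ≤ (Set.univ : Set (Fin (n + 1))).ncard :=
          Set.ncard_le_ncard (Set.subset_univ _) (Set.toFinite _)
      _ = n + 1 := by simp [Set.ncard_univ]

lemma asdim_restrict {X : Type*} [PseudoMetricSpace X] (A : Set X) (n : ℕ)
    (h : AsdimLEWith (fun a b : X => dist a b) n) :
    AsdimLEWith (fun a b : A => dist (a : X) (b : X)) n := by
  classical
  intro r hr
  obtain ⟨𝒰, D, hcov, hbd, hmult⟩ := h r hr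
  refine ⟨(fun U => Subtype.val ⁻¹' U) '' 𝒰, D, ?_, ?_, ?_⟩
  · apply Set.eq_univ_of_univ_subset
    intro a _
    have : (a : X) ∈ ⋃₀ 𝒰 := by rw [hcov]; trivial
    obtain ⟨U, hU, haU⟩ := this
    exact ⟨_, ⟨U, hU, rfl⟩, haU⟩
  · rintro V ⟨U, hU, rfl⟩ a ha b hb
    exact hbd U hU _ ha _ hb
  · intro a
    have hsub : {V : Set A | V ∈ (fun U => (Subtype.val : A → X) ⁻¹' U) '' 𝒰 ∧
          ∃ y ∈ V, dist (a : X) (y : X) ≤ r} ⊆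
        (fun U => Subtype.val ⁻¹' U) '' {U | U ∈ 𝒰 ∧ ∃ y ∈ U, dist (a : X) y ≤ r} := by
      rintro V ⟨⟨U, hU, rfl⟩, y, hy, hdy⟩
      exact ⟨U, ⟨hU, Subtype.val y, hy, hdy⟩, rfl⟩
    have hfin0 := (hmult (a : X)).1
    have hcard0 := (hmult (a : X)).2
    constructor
    · exact (hfin0.image _).subset hsub
    · calc _ ≤ ((fun U => Subtype.val ⁻¹' U) ''
            {U | U ∈ 𝒰 ∧ ∃ y ∈ U, dist (a : X) y ≤ r}).ncard :=
          Set.ncard_le_ncard hsub (hfin0.image _)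
        _ ≤ {U | U ∈ 𝒰 ∧ ∃ y ∈ U, dist (a : X) y ≤ r}.ncard := Set.ncard_image_le hfin0
        _ ≤ n + 1 := hcard0

lemma coloredOn_of_subtype {X : Type*} [PseudoMetricSpace X] (A : Set X) (n : ℕ) (s : ℝ)
    (h : ColoredOn (Set.univ : Set A) n s) : ColoredOn A n s := by
  obtain ⟨𝒲, D, hcov, hbd, hdisj⟩ := h
  refine ⟨fun i => (Set.image (Subtype.val : A → X)) '' 𝒲 i, D, ?_, ?_, ?_⟩
  · intro a ha
    obtain ⟨t, ⟨i, rfl⟩, W, hW, hmem⟩ := hcov (Set.mem_univ (⟨a, ha⟩ : A))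
    exact Set.mem_iUnion.2 ⟨i, Subtype.val '' W, Set.mem_image_of_mem _ hW,
      ⟨⟨a, ha⟩, hmem, rfl⟩⟩
  · rintro i W ⟨V, hV, rfl⟩ a ⟨x, hx, rfl⟩ b ⟨y, hy, rfl⟩
    have := hbd i V hV x hx y hy
    rwa [Subtype.dist_eq] at this
  · rintro i W ⟨V, hV, rfl⟩ W' ⟨V', hV', rfl⟩ hne a ⟨x, hx, rfl⟩ b ⟨y, hy, rfl⟩
    have hVne : V ≠ V' := by rintro rfl; exact hne rfl
    have := hdisj i V hV V' hV' hVne x hx y hy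
    rwa [Subtype.dist_eq] at this

section
variable {X : Type*} [PseudoMetricSpace X]

lemma colored_of_asdim (n : ℕ)
    (h : AsdimLEWith (fun a b : X => dist a b) n) (s : ℝ) (hs : 0 < s) :
    ColoredOn (Set.univ : Set X) n s := by
  classical
  obtain ⟨𝒰, D, hcov, hbd, hmult⟩ :=
    h (((2 * n + 1 : ℕ) : ℝ) * s) (by positivity)
  set T : ℕ → X → Set (Set X) :=
    fun j x => {U | U ∈ 𝒰 ∧ ∃ y ∈ U, dist x y ≤ (j : ℝ) * s} with hT
  have Tmono : ∀ (x : X) (j k : ℕ), j ≤ k → T j x ⊆ T k x := by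
    intro x j k hjk U hU
    obtain ⟨hU𝒰, y, hy, hd⟩ := hU
    refine ⟨hU𝒰, y, hy, hd.trans ?_⟩
    have hjk' : (j : ℝ) ≤ (k : ℝ) := by exact_mod_cast hjk
    nlinarith
  have Tfin : ∀ (x : X) (j : ℕ), j ≤ 2 * n + 1 → (T j x).Finite := by
    intro x j hj
    exact ((hmult x).1).subset (Tmono x j (2 * n + 1) hj)
  have T0ne : ∀ x : X, (T 0 x).Nonempty := by
    intro x
    have hx : x ∈ ⋃₀ 𝒰 := by rw [hcov]; trivial
    obtain ⟨U, hU, hxU⟩ := hx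
    exact ⟨U, hU, x, hxU, by simp⟩
  have Hx : ∀ x : X, ∃ i, i ≤ n ∧ T (2 * i) x = T (2 * i + 1) x := by
    intro x
    by_contra hc
    push_neg at hc
    have step : ∀ i, i ≤ n → (T 0 x).ncard + i + 1 ≤ (T (2 * i + 1) x).ncard := by
      intro i
      induction i with
      | zero =>
        intro _
        have hss : T (2 * 0) x ⊂ T (2 * 0 + 1) x :=
          (Tmono x (2 * 0) (2 * 0 + 1) (by omega)).ssubset_of_ne (hc 0 (Nat.zero_le n))
        have hlt := Set.ncard_lt_ncard hss (Tfin x (2 * 0 + 1) (by omega))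
        norm_num at hlt ⊢
        omega
      | succ i ih =>
        intro hi
        have h1 := ih (by omega)
        have h2 : (T (2 * i + 1) x).ncard ≤ (T (2 * (i + 1)) x).ncard :=
          Set.ncard_le_ncard (Tmono x (2 * i + 1) (2 * (i + 1)) (by omega))
            (Tfin x (2 * (i + 1)) (by omega))
        have hss : T (2 * (i + 1)) x ⊂ T (2 * (i + 1) + 1) x :=
          (Tmono x (2 * (i + 1)) (2 * (i + 1) + 1) (by omega)).ssubset_of_ne
            (hc (i + 1) hi)
        have h3 := Set.ncard_lt_ncard hss (Tfin x (2 * (i + 1) + 1) (by omega))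
        omega
    have h4 := step n le_rfl
    have h5 : (T (2 * n + 1) x).ncard ≤ n + 1 := (hmult x).2
    have h6 : 0 < (T 0 x).ncard := by
      rw [Set.ncard_pos (Tfin x 0 (by omega))]
      exact T0ne x
    omega
  choose c hc1 hc2 using Hx
  set S : X → Set (Set X) := fun x => T (2 * c x) x with hS
  have key : ∀ a b : X, c a = c b → dist a b ≤ s → S a ⊆ S b := by
    intro a b hcab hd U hU
    obtain ⟨hU𝒰, y, hy, hdy⟩ := hU
    have hmem : U ∈ T (2 * c b + 1) b := by
      refine ⟨hU𝒰, y, hy, ?_⟩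
      have ht : dist b y ≤ dist b a + dist a y := dist_triangle _ _ _
      rw [dist_comm b a] at ht
      rw [hcab] at hdy
      push_cast at hdy ⊢
      linarith
    rwa [← hc2 b] at hmem
  have keyeq : ∀ a b : X, c a = c b → dist a b ≤ s → S a = S b := by
    intro a b hcab hd
    refine Set.Subset.antisymm (key a b hcab hd) (key b a hcab.symm ?_)
    rwa [dist_comm]
  refine ⟨fun i => {W | ∃ x : X, c x = (i : ℕ) ∧
      W = {y | c y = (i : ℕ) ∧ S y = S x}}, 4 * (n : ℝ) * s + D, ?_, ?_, ?_⟩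
  · intro x _
    refine Set.mem_iUnion.2 ⟨⟨c x, Nat.lt_succ_of_le (hc1 x)⟩, ?_⟩
    exact ⟨{y | c y = c x ∧ S y = S x}, ⟨x, rfl, rfl⟩, rfl, rfl⟩
  · rintro i W ⟨x₀, hx₀, rfl⟩ a ⟨hca, hSa⟩ b ⟨hcb, hSb⟩
    have hSab : S a = S b := by rw [hSa, hSb]
    have hUne : (S a).Nonempty :=
      (T0ne a).mono (Tmono a 0 (2 * c a) (by omega))
    obtain ⟨U, hU⟩ := hUne
    obtain ⟨hU𝒰, y, hy, hdy⟩ := hU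
    have hU' : U ∈ S b := hSab ▸ (show U ∈ S a from ⟨hU𝒰, y, hy, hdy⟩)
    obtain ⟨_, z, hz, hdz⟩ := hU'
    have hyz : dist y z ≤ D := hbd U hU𝒰 y hy z hz
    have hcan : (c a : ℝ) ≤ (n : ℝ) := by exact_mod_cast hc1 a
    have hcbn : (c b : ℝ) ≤ (n : ℝ) := by exact_mod_cast hc1 b
    push_cast at hdy hdz
    have h4 : dist a b ≤ dist a y + dist y z + dist z b := dist_triangle4 a y z b
    rw [dist_comm z b] at h4
    nlinarith [dist_nonneg (x := a) (y := y)]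
  · rintro i W ⟨x₀, hx₀, rfl⟩ W' ⟨x₁, hx₁, rfl⟩ hne a ha b hb
    by_contra hle
    push_neg at hle
    obtain ⟨hca, hSa⟩ := ha
    obtain ⟨hcb, hSb⟩ := hb
    have hSab : S a = S b := keyeq a b (by rw [hca, hcb]) hle
    apply hne
    ext y
    constructor
    · rintro ⟨h1, h2⟩
      exact ⟨h1, by rw [h2, ← hSa, hSab, hSb]⟩
    · rintro ⟨h1, h2⟩
      exact ⟨h1, by rw [h2, ← hSb, ← hSab, hSa]⟩
lemma coloredOn_union (A B : Set X) (n : ℕ)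
    (hA : ∀ s : ℝ, 0 < s → ColoredOn A n s)
    (hB : ∀ s : ℝ, 0 < s → ColoredOn B n s)
    (s : ℝ) (hs : 0 < s) : ColoredOn (A ∪ B) n s := by
  classical
  obtain ⟨𝒰, BU, hUcov, hUbd, hUdisj⟩ := hA s hs
  set B0 : ℝ := max BU 0 with hB0
  have hB0nn : 0 ≤ B0 := le_max_right _ _
  have hBUB0 : BU ≤ B0 := le_max_left _ _
  obtain ⟨𝒱, BV, hVcov, hVbd, hVdisj⟩ := hB (3 * s + 2 * B0) (by linarith)
  set near : Set X → Set X → Prop := fun U V => ∃ u ∈ U, ∃ v ∈ V, dist u v ≤ s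
    with hnear
  set tld : Fin (n + 1) → Set X → Set X :=
    fun i V => V ∪ ⋃₀ {U | U ∈ 𝒰 i ∧ near U V} with htld
  have htldpt : ∀ (i : Fin (n + 1)) (V : Set X), V ∈ 𝒱 i →
      ∀ p ∈ tld i V, ∃ v ∈ V, dist p v ≤ B0 + s := by
    intro i V hV p hp
    rcases hp with hp | hp
    · exact ⟨p, hp, by simp [dist_self]; linarith⟩
    · obtain ⟨U, ⟨hU, u, hu, v, hv, huv⟩, hpU⟩ := hp
      refine ⟨v, hv, ?_⟩
      have h1 : dist p v ≤ dist p u + dist u v := dist_triangle _ _ _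
      have h2 : dist p u ≤ BU := hUbd i U hU p hpU u hu
      linarith
  refine ⟨fun i => (tld i '' 𝒱 i) ∪ {U | U ∈ 𝒰 i ∧ ∀ V ∈ 𝒱 i, ¬ near U V},
    max BU (BV + 2 * (B0 + s)), ?_, ?_, ?_⟩
  · intro x hx
    rcases hx with hx | hx
    · obtain ⟨t, ⟨i, rfl⟩, U, hU, hxU⟩ := hUcov hx
      by_cases hex : ∃ V ∈ 𝒱 i, near U V
      · obtain ⟨V, hV, hnUV⟩ := hex
        refine Set.mem_iUnion.2 ⟨i, tld i V, Or.inl (Set.mem_image_of_mem _ hV), ?_⟩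
        exact Or.inr ⟨U, ⟨hU, hnUV⟩, hxU⟩
      · push_neg at hex
        exact Set.mem_iUnion.2 ⟨i, U, Or.inr ⟨hU, hex⟩, hxU⟩
    · obtain ⟨t, ⟨i, rfl⟩, V, hV, hxV⟩ := hVcov hx
      exact Set.mem_iUnion.2 ⟨i, tld i V, Or.inl (Set.mem_image_of_mem _ hV),
        Or.inl hxV⟩
  · rintro i W (⟨V, hV, rfl⟩ | ⟨hU, -⟩)
    · intro a ha b hb
      obtain ⟨v, hv, hav⟩ := htldpt i V hV a ha
      obtain ⟨v', hv', hbv'⟩ := htldpt i V hV b hb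
      have hvv' : dist v v' ≤ BV := hVbd i V hV v hv v' hv'
      have h1 : dist a b ≤ dist a v + dist v v' + dist v' b := dist_triangle4 _ _ _ _
      rw [dist_comm v' b] at h1
      have : dist a b ≤ BV + 2 * (B0 + s) := by linarith
      exact this.trans (le_max_right _ _)
    · intro a ha b hb
      exact (hUbd i W hU a ha b hb).trans (le_max_left _ _)
  · rintro i W hW W' hW' hne a ha b hb
    by_contra hle
    push_neg at hle
    rcases hW with ⟨V, hV, rfl⟩ | ⟨hU, hfar⟩
    · rcases hW' with ⟨V', hV', rfl⟩ | ⟨hU', hfar'⟩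
      · -- tilde vs tilde
        have hVne : V ≠ V' := by rintro rfl; exact hne rfl
        obtain ⟨v, hv, hav⟩ := htldpt i V hV a ha
        obtain ⟨v', hv', hbv'⟩ := htldpt i V' hV' b hb
        have hd := hVdisj i V hV V' hV' hVne v hv v' hv'
        have h1 : dist v v' ≤ dist v a + dist a b + dist b v' := dist_triangle4 _ _ _ _
        rw [dist_comm v a] at h1
        linarith
      · -- tilde vs leftover
        rcases ha with ha | ha
        · exact hfar' V hV ⟨b, hb, a, ha, by rw [dist_comm]; linarith⟩
        · obtain ⟨U₁, ⟨hU₁, hnU₁V⟩, haU₁⟩ := ha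
          by_cases hUeq : U₁ = W'
          · exact hfar' V hV (hUeq ▸ hnU₁V)
          · have := hUdisj i U₁ hU₁ W' hU' hUeq a haU₁ b hb
            linarith
    · rcases hW' with ⟨V', hV', rfl⟩ | ⟨hU', hfar'⟩
      · -- leftover vs tilde
        rcases hb with hb | hb
        · exact hfar V' hV' ⟨a, ha, b, hb, hle⟩
        · obtain ⟨U₁, ⟨hU₁, hnU₁V⟩, hbU₁⟩ := hb
          by_cases hUeq : W = U₁
          · exact hfar V' hV' (hUeq ▸ hnU₁V)
          · have := hUdisj i W hU U₁ hU₁ hUeq a ha b hbU₁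
            linarith
      · -- leftover vs leftover
        have := hUdisj i W hU W' hU' hne a ha b hb
        linarith
end
/-- If `M = M' ∪ M''`, then `asdim M = max (asdim M') (asdim M'')`, where the subsets carry
the induced metric. (Stated as: `asdim M ≤ n` iff both `asdim M' ≤ n` and `asdim M'' ≤ n`.) -/

theorem asdim_union {M : Type*} [PseudoMetricSpace M] (M' M'' : Set M)
    (h : M' ∪ M'' = Set.univ) (n : ℕ) :
    AsdimLEWith (fun a b : M => dist a b) n ↔
      (AsdimLEWith (fun a b : M' => dist (a : M) (b : M)) n ∧
        AsdimLEWith (fun a b : M'' => dist (a : M) (b : M)) n) := by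
  constructor
  · intro hM
    exact ⟨asdim_restrict M' n hM, asdim_restrict M'' n hM⟩
  · rintro ⟨h1, h2⟩
    have e1 : (fun a b : M' => dist (a : M) (b : M)) = fun a b : M' => dist a b := by
      funext a b; exact (Subtype.dist_eq a b).symm
    have e2 : (fun a b : M'' => dist (a : M) (b : M)) = fun a b : M'' => dist a b := by
      funext a b; exact (Subtype.dist_eq a b).symm
    rw [e1] at h1
    rw [e2] at h2
    have c1 : ∀ s : ℝ, 0 < s → ColoredOn M' n s := fun s hs =>
      coloredOn_of_subtype M' n s (colored_of_asdim n h1 s hs)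
    have c2 : ∀ s : ℝ, 0 < s → ColoredOn M'' n s := fun s hs =>
      coloredOn_of_subtype M'' n s (colored_of_asdim n h2 s hs)
    have cu : ∀ s : ℝ, 0 < s → ColoredOn (Set.univ : Set M) n s := by
      intro s hs
      have := coloredOn_union M' M'' n c1 c2 s hs
      rwa [h] at this
    exact asdim_of_colored n cu
end

section
/- Let M be a metric space with M = ⋃_α M_α, where the family {M_α} has asymptotic dimension at most n uniformly. Suppose for every s > 0 there is a subset Y_s ⊆ M with asdim Y_s ≤ n such that the sets M_α \ Y_s (for fixed s, varying α) are pairwise s-separated. Then asdim M ≤ n. -/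
/-- Bell–Dranishnikov infinite union theorem: if `M = ⋃ α, Mα α` where the family `{Mα}` has
asymptotic dimension at most `n` uniformly, and for every `s > 0` there is `Y_s ⊆ M` with
`asdim Y_s ≤ n` such that the sets `Mα \ Y_s` are pairwise `s`-separated, then `asdim M ≤ n`. -/
theorem asdim_infinite_union {M ι : Type*} [PseudoMetricSpace M] (Mα : ι → Set M) (n : ℕ)
    (hcover : ⋃ α, Mα α = Set.univ)
    (hunif : ∀ r : ℝ, 0 < r → ∃ d : ℝ, ∀ α : ι, ∃ 𝒰 : Set (Set M),
      ⋃₀ 𝒰 = Mα α ∧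
      (∀ U ∈ 𝒰, ∀ a ∈ U, ∀ b ∈ U, dist a b ≤ d) ∧
      ∀ x ∈ Mα α, {U | U ∈ 𝒰 ∧ ∃ y ∈ U, dist x y ≤ r}.Finite ∧
        {U | U ∈ 𝒰 ∧ ∃ y ∈ U, dist x y ≤ r}.ncard ≤ n + 1)
    (hY : ∀ s : ℝ, 0 < s → ∃ Y : Set M,
      AsdimLEWith (fun a b : Y => dist (a : M) (b : M)) n ∧
      ∀ α β : ι, α ≠ β → ∀ a ∈ Mα α \ Y, ∀ b ∈ Mα β \ Y, s ≤ dist a b) :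
    AsdimLEWith (fun a b : M => dist a b) n := by
  classical
  intro r hr
  beta_reduce
  obtain ⟨d₀, hd₀⟩ := hunif (2 * r) (by linarith)
  choose 𝒰 hUcov hUdiam hUmult using hd₀
  set d : ℝ := max d₀ 0 with hd_def
  have hd0 : (0:ℝ) ≤ d := le_max_right _ _
  have hdd : d₀ ≤ d := le_max_left _ _
  obtain ⟨Y, hYdim, hsep⟩ := hY (2 * r + 1) (by linarith)
  obtain ⟨𝒱, DY, hVcov, hVdiam, hVmult⟩ := hYdim (2 * (3 * r + d)) (by nlinarith)
  have hnear : ∀ U : Set M, (∃ u ∈ U, ∃ y ∈ Y, dist u y ≤ 2 * r) →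
      ∃ V : Set Y, V ∈ 𝒱 ∧ ∃ u ∈ U, ∃ v : Y, v ∈ V ∧ dist u (v : M) ≤ 2 * r := by
    rintro U ⟨u, hu, y, hy, hdist⟩
    have hyY : (⟨y, hy⟩ : Y) ∈ ⋃₀ 𝒱 := by rw [hVcov]; trivial
    obtain ⟨V, hV, hyV⟩ := hyY
    exact ⟨V, hV, u, hu, ⟨y, hy⟩, hyV, hdist⟩
  choose! φ hφ using hnear
  set sat : Set Y → Set M := fun V =>
    (Subtype.val '' V) ∪
      ⋃₀ {U | (∃ α, U ∈ 𝒰 α) ∧ (∃ u ∈ U, ∃ y ∈ Y, dist u y ≤ 2 * r) ∧ φ U = V}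
    with hsat_def
  set L : Set (Set M) := {U | (∃ α, U ∈ 𝒰 α) ∧ ¬ ∃ u ∈ U, ∃ y ∈ Y, dist u y ≤ 2 * r}
    with hL_def
  -- every point of a saturated set is close to the core
  have hsatpt : ∀ V ∈ 𝒱, ∀ a ∈ sat V, ∃ v : Y, v ∈ V ∧ dist a (v : M) ≤ 2 * r + d := by
    intro V hV a ha
    rw [hsat_def] at ha
    rcases ha with ⟨v, hv, rfl⟩ | ⟨U, ⟨⟨α, hUα⟩, hnearU, hφU⟩, haU⟩
    · exact ⟨v, hv, by rw [dist_self]; positivity⟩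
    · obtain ⟨-, u, hu, v, hvφ, hdv⟩ := hφ U hnearU
      refine ⟨v, hφU ▸ hvφ, ?_⟩
      calc dist a (v : M) ≤ dist a u + dist u (v : M) := dist_triangle _ _ _
        _ ≤ d₀ + (2 * r) := add_le_add (hUdiam α U hUα a haU u hu) hdv
        _ ≤ 2 * r + d := by linarith
  refine ⟨sat '' 𝒱 ∪ L, max d (2 * (2 * r + d) + DY), ?_, ?_, ?_⟩
  · -- covering
    rw [Set.eq_univ_iff_forall]
    intro x
    have hx : x ∈ ⋃ α, Mα α := hcover ▸ Set.mem_univ x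
    obtain ⟨α, hxα⟩ := Set.mem_iUnion.mp hx
    have hx2 : x ∈ ⋃₀ 𝒰 α := (hUcov α).symm ▸ hxα
    obtain ⟨U, hU, hxU⟩ := hx2
    by_cases hnU : ∃ u ∈ U, ∃ y ∈ Y, dist u y ≤ 2 * r
    · refine ⟨sat (φ U), Or.inl ⟨φ U, (hφ U hnU).1, rfl⟩, ?_⟩
      rw [hsat_def]
      exact Or.inr ⟨U, ⟨⟨α, hU⟩, hnU, rfl⟩, hxU⟩
    · exact ⟨U, Or.inr ⟨⟨α, hU⟩, hnU⟩, hxU⟩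
  · -- diameter
    rintro W hW a ha b hb
    rcases hW with ⟨V, hV, rfl⟩ | ⟨⟨α, hUα⟩, -⟩
    · obtain ⟨va, hva, hda⟩ := hsatpt V hV a ha
      obtain ⟨vb, hvb, hdb⟩ := hsatpt V hV b hb
      have h1 : dist (va : M) (vb : M) ≤ DY := hVdiam V hV va hva vb hvb
      have h2 : dist a b ≤ dist a (va : M) + dist (va : M) (vb : M) + dist (vb : M) b :=
        dist_triangle4 _ _ _ _
      have h3 : dist (vb : M) b = dist b (vb : M) := dist_comm _ _
      have : dist a b ≤ 2 * (2 * r + d) + DY := by rw [h3] at h2; linarith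
      exact le_trans this (le_max_right _ _)
    · exact le_trans (le_trans (hUdiam α W hUα a ha b hb) hdd) (le_max_left _ _)
  · -- multiplicity
    intro x
    by_cases hmix : ∃ W, (W ∈ sat '' 𝒱 ∪ L) ∧ (∃ y ∈ W, dist x y ≤ r) ∧ W ∈ L
    · -- Case A : some "far" set meets the ball
      obtain ⟨W₀, hW₀𝒲, ⟨u', hu'W₀, hu'x⟩, hW₀L⟩ := hmix
      rw [hL_def] at hW₀L
      obtain ⟨⟨α, hW₀α⟩, hW₀far⟩ := hW₀L
      have hu'M : u' ∈ Mα α := (hUcov α) ▸ ⟨W₀, hW₀α, hu'W₀⟩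
      have hu'Y : u' ∉ Y := fun h =>
        hW₀far ⟨u', hu'W₀, u', h, by rw [dist_self]; positivity⟩
      have key : ∀ (γ : ι) (U : Set M), U ∈ 𝒰 γ → ∀ y ∈ U, y ∉ Y → dist x y ≤ r →
          U ∈ 𝒰 α := by
        intro γ U hUγ y hyU hyY hxy
        have hyM : y ∈ Mα γ := (hUcov γ) ▸ ⟨U, hUγ, hyU⟩
        by_cases hga : γ = α
        · exact hga ▸ hUγ
        · exfalso
          have hs := hsep γ α hga y ⟨hyM, hyY⟩ u' ⟨hu'M, hu'Y⟩
          have hdy : dist y u' ≤ 2 * r := by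
            calc dist y u' ≤ dist y x + dist x u' := dist_triangle _ _ _
              _ ≤ r + r := add_le_add (by rw [dist_comm]; exact hxy) hu'x
              _ = 2 * r := by ring
          linarith
      have noY : ∀ y : M, y ∈ Y → dist x y ≤ r → False := by
        intro y hy hxy
        refine hW₀far ⟨u', hu'W₀, y, hy, ?_⟩
        calc dist u' y ≤ dist u' x + dist x y := dist_triangle _ _ _
          _ ≤ r + r := add_le_add (by rw [dist_comm]; exact hu'x) hxy
          _ = 2 * r := by ring
      have KL : ∀ W ∈ {W | (W ∈ sat '' 𝒱 ∪ L) ∧ ∃ y ∈ W, dist x y ≤ r},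
          ∃ U, U ∈ 𝒰 α ∧ (∃ y ∈ U, dist u' y ≤ 2 * r) ∧
            ((¬ (∃ u ∈ U, ∃ z ∈ Y, dist u z ≤ 2 * r)) ∧ W = U ∨
              (∃ u ∈ U, ∃ z ∈ Y, dist u z ≤ 2 * r) ∧ W = sat (φ U)) := by
        rintro W ⟨hW𝒲, y, hyW, hxy⟩
        have hdu'y : dist u' y ≤ 2 * r := by
          calc dist u' y ≤ dist u' x + dist x y := dist_triangle _ _ _
            _ ≤ r + r := add_le_add (by rw [dist_comm]; exact hu'x) hxy
            _ = 2 * r := by ring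
        by_cases hWL : W ∈ L
        · rw [hL_def] at hWL
          obtain ⟨⟨γ, hWγ⟩, hWfar⟩ := hWL
          have hyY : y ∉ Y := fun h =>
            hWfar ⟨y, hyW, y, h, by rw [dist_self]; positivity⟩
          exact ⟨W, key γ W hWγ y hyW hyY hxy, ⟨y, hyW, hdu'y⟩, Or.inl ⟨hWfar, rfl⟩⟩
        · rcases hW𝒲 with ⟨V, hV, rfl⟩ | h
          · rw [hsat_def] at hyW
            rcases hyW with ⟨v, hv, rfl⟩ | ⟨U, ⟨⟨γ, hUγ⟩, hnearU, hφU⟩, hyU⟩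
            · exact absurd (noY _ v.2 hxy) (fun h => h)
            · have hyY : y ∉ Y := fun h => noY y h hxy
              refine ⟨U, key γ U hUγ y hyU hyY hxy, ⟨y, hyU, hdu'y⟩,
                Or.inr ⟨hnearU, by rw [hφU]⟩⟩
          · exact absurd h hWL
      choose! f hf1 hf2 hf3 using KL
      have hinj : Set.InjOn f {W | (W ∈ sat '' 𝒱 ∪ L) ∧ ∃ y ∈ W, dist x y ≤ r} := by
        intro W₁ h₁ W₂ h₂ heq
        rcases hf3 W₁ h₁ with ⟨hn1, hW1⟩ | ⟨hn1, hW1⟩ <;>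
          rcases hf3 W₂ h₂ with ⟨hn2, hW2⟩ | ⟨hn2, hW2⟩
        · rw [hW1, hW2, heq]
        · rw [heq] at hn1; exact absurd hn2 hn1
        · rw [heq] at hn1; exact absurd hn1 hn2
        · rw [hW1, hW2, heq]
      have hmaps : ∀ W ∈ {W | (W ∈ sat '' 𝒱 ∪ L) ∧ ∃ y ∈ W, dist x y ≤ r},
          f W ∈ {U | U ∈ 𝒰 α ∧ ∃ y ∈ U, dist u' y ≤ 2 * r} :=
        fun W hW => ⟨hf1 W hW, hf2 W hW⟩
      obtain ⟨hTfin, hTcard⟩ := hUmult α u' hu'M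
      constructor
      · refine Set.Finite.of_finite_image (hTfin.subset ?_) hinj
        rintro _ ⟨W, hW, rfl⟩
        exact hmaps W hW
      · exact le_trans (Set.ncard_le_ncard_of_injOn f hmaps hinj hTfin) hTcard
    · -- Case B : all members of the ball's star are saturated sets
      have hnotL : ∀ W ∈ {W | (W ∈ sat '' 𝒱 ∪ L) ∧ ∃ y ∈ W, dist x y ≤ r},
          ∃ V : Set Y, V ∈ 𝒱 ∧ sat V = W := by
        rintro W ⟨hW𝒲, hWball⟩
        rcases hW𝒲 with ⟨V, hV, heq⟩ | h
        · exact ⟨V, hV, heq⟩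
        · exact absurd ⟨W, Or.inr h, hWball, h⟩ hmix
      rcases Set.eq_empty_or_nonempty
          {W | (W ∈ sat '' 𝒱 ∪ L) ∧ ∃ y ∈ W, dist x y ≤ r} with hS | ⟨W₁, hW₁S⟩
      · rw [hS]
        exact ⟨Set.finite_empty, by simp⟩
      · obtain ⟨V₁, hV₁, heq₁⟩ := hnotL W₁ hW₁S
        obtain ⟨hW₁𝒲, y₁, hy₁W, hy₁x⟩ := hW₁S
        obtain ⟨v₁, hv₁V, hdv₁⟩ := hsatpt V₁ hV₁ y₁ (heq₁ ▸ hy₁W)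
        have hxv₁ : dist x (v₁ : M) ≤ 3 * r + d := by
          calc dist x (v₁ : M) ≤ dist x y₁ + dist y₁ (v₁ : M) := dist_triangle _ _ _
            _ ≤ r + (2 * r + d) := add_le_add hy₁x hdv₁
            _ = 3 * r + d := by ring
        have KLB : ∀ W ∈ {W | (W ∈ sat '' 𝒱 ∪ L) ∧ ∃ y ∈ W, dist x y ≤ r},
            ∃ V : Set Y, V ∈ 𝒱 ∧ sat V = W ∧
              ∃ w ∈ V, dist (v₁ : M) (w : M) ≤ 2 * (3 * r + d) := by
          intro W hWS
          obtain ⟨V, hV, heqW⟩ := hnotL W hWS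
          obtain ⟨-, yW, hyWW, hyWx⟩ := hWS
          obtain ⟨vW, hvWV, hdvW⟩ := hsatpt V hV yW (heqW ▸ hyWW)
          refine ⟨V, hV, heqW, vW, hvWV, ?_⟩
          calc dist (v₁ : M) (vW : M)
              ≤ dist (v₁ : M) x + dist x yW + dist yW (vW : M) := dist_triangle4 _ _ _ _
            _ ≤ (3 * r + d) + r + (2 * r + d) := by
                refine add_le_add (add_le_add ?_ hyWx) hdvW
                rw [dist_comm]; exact hxv₁
            _ = 2 * (3 * r + d) := by ring
        choose! g hg1 hg2 hg3 using KLB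
        have hinj : Set.InjOn g {W | (W ∈ sat '' 𝒱 ∪ L) ∧ ∃ y ∈ W, dist x y ≤ r} := by
          intro W₁' h₁ W₂' h₂ heq
          rw [← hg2 W₁' h₁, ← hg2 W₂' h₂, heq]
        have hmaps : ∀ W ∈ {W | (W ∈ sat '' 𝒱 ∪ L) ∧ ∃ y ∈ W, dist x y ≤ r},
            g W ∈ {V | V ∈ 𝒱 ∧ ∃ w ∈ V,
              dist ((v₁ : Y) : M) ((w : Y) : M) ≤ 2 * (3 * r + d)} :=
          fun W hW => ⟨hg1 W hW, hg3 W hW⟩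
        obtain ⟨hTfin, hTcard⟩ := hVmult v₁
        constructor
        · refine Set.Finite.of_finite_image (hTfin.subset ?_) hinj
          rintro _ ⟨W, hW, rfl⟩
          exact hmaps W hW
        · exact le_trans (Set.ncard_le_ncard_of_injOn g hmaps hinj hTfin) hTcard
end

section
/- Suppose a finitely generated group G acts by isometries on a metric space M with asdim M < m, and for some point x ∈ M every R-quasi-stabilizer W_R(x) = {g ∈ G : dist(x, gx) ≤ R} satisfies asdim W_R(x) ≤ n (with respect to a word metric on G). Then asdim G ≤ (m+1)(n+1) − 1. -/
/-- Word length of `g` with respect to a (symmetric) generating set `S`. -/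
noncomputable def wordLength {G : Type*} [Group G] (S : Set G) (g : G) : ℕ :=
  sInf {n : ℕ | ∃ l : List G, l.length = n ∧ (∀ x ∈ l, x ∈ S) ∧ l.prod = g}

/-- Left-invariant word metric associated to a generating set `S`. -/
noncomputable def wordDist {G : Type*} [Group G] (S : Set G) (f g : G) : ℝ :=
  (wordLength S (f⁻¹ * g) : ℝ)

/-! The orbit map `g ↦ g • x` is coarsely Lipschitz, so pulling back a cover of `M` of
multiplicity `≤ m` gives a cover of `G` of multiplicity `≤ m` at scale `r`. If the cover of `M`
has mesh `R`, each pulled-back piece lies in a left translate of `W_R(x)`. Covering `W_R(x)`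
with multiplicity `≤ n + 1` at scale `2r` and translating covers each piece with multiplicity
`≤ n + 1` at scale `r`; intersecting gives a uniformly bounded cover of `G` of multiplicity
`≤ m (n + 1)`. -/

open Set
open scoped Pointwise

theorem Set.Finite.encard_biUnion_le_mul {ι α : Type*} {t : Set ι} {s : ι → Set α} {b : ℕ∞}
    (ht : t.Finite) (hs : ∀ i ∈ t, (s i).encard ≤ b) :
    (⋃ i ∈ t, s i).encard ≤ t.encard * b := by
  have := ht.toFinset.set_encard_biUnion_le s
  simp only [Finite.mem_toFinset] at this
  refine this.trans ?_
  rw [ht.encard_eq_coe_toFinset_card, ← nsmul_eq_mul]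
  exact Finset.sum_le_card_nsmul _ _ _ fun i hi => hs i (ht.mem_toFinset.1 hi)

section Covers

variable {X : Type*} (d : X → X → ℝ)

def membersNear (𝒰 : Set (Set X)) (r : ℝ) (x : X) : Set (Set X) :=
  {U | U ∈ 𝒰 ∧ ∃ y ∈ U, d x y ≤ r}

theorem asdimLEWith_iff {n : ℕ} :
    AsdimLEWith d n ↔ ∀ r : ℝ, 0 < r → ∃ (𝒰 : Set (Set X)) (D : ℝ),
      ⋃₀ 𝒰 = univ ∧ (∀ U ∈ 𝒰, ∀ a ∈ U, ∀ b ∈ U, d a b ≤ D) ∧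
      ∀ x, (membersNear d 𝒰 r x).encard ≤ n + 1 := by
  simp only [AsdimLEWith, membersNear, ← Nat.cast_succ, encard_le_coe_iff_finite_ncard_le]

theorem AsdimLEWith.mono {n n' : ℕ} (h : AsdimLEWith d n) (hn : n ≤ n') :
    AsdimLEWith d n' := by
  rw [asdimLEWith_iff] at h ⊢
  intro r hr
  obtain ⟨𝒰, D, hcov, hbdd, hmult⟩ := h r hr
  exact ⟨𝒰, D, hcov, hbdd, fun x => (hmult x).trans (by gcongr)⟩

variable {d}

theorem membersNear_preimage_subset {Y : Type*} {e : Y → Y → ℝ} {f : X → Y} {r r' : ℝ}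
    (hf : ∀ a b, d a b ≤ r → e (f a) (f b) ≤ r') (𝒰 : Set (Set Y)) (x : X) :
    membersNear d (preimage f '' 𝒰) r x ⊆ preimage f '' membersNear e 𝒰 r' (f x) := by
  rintro _ ⟨⟨U, hU, rfl⟩, y, hy, hxy⟩
  exact ⟨U, ⟨hU, f y, hy, hf x y hxy⟩, rfl⟩

def coverRefinement (𝒜 : Set (Set X)) (ℬ : Set X → Set (Set X)) : Set (Set X) :=
  {W | ∃ A ∈ 𝒜, ∃ B ∈ ℬ A, W = A ∩ B}

variable {𝒜 : Set (Set X)} {ℬ : Set X → Set (Set X)}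

theorem sUnion_coverRefinement (h𝒜 : ⋃₀ 𝒜 = univ) (hℬ : ∀ A ∈ 𝒜, A ⊆ ⋃₀ ℬ A) :
    ⋃₀ coverRefinement 𝒜 ℬ = univ := by
  refine eq_univ_of_forall fun x => ?_
  obtain ⟨A, hA, hxA⟩ := mem_sUnion.1 (h𝒜 ▸ mem_univ x)
  obtain ⟨B, hB, hxB⟩ := mem_sUnion.1 (hℬ A hA hxA)
  exact ⟨A ∩ B, ⟨A, hA, B, hB, rfl⟩, hxA, hxB⟩

theorem coverRefinement_bounded {D : ℝ}
    (hℬ : ∀ A ∈ 𝒜, ∀ B ∈ ℬ A, ∀ a ∈ B, ∀ b ∈ B, d a b ≤ D) :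
    ∀ W ∈ coverRefinement 𝒜 ℬ, ∀ a ∈ W, ∀ b ∈ W, d a b ≤ D := by
  rintro _ ⟨A, hA, B, hB, rfl⟩ a ha b hb
  exact hℬ A hA B hB a ha.2 b hb.2

theorem encard_membersNear_coverRefinement_le {r : ℝ} {x : X} {k : ℕ} {n : ℕ∞}
    (h𝒜 : (membersNear d 𝒜 r x).encard ≤ k)
    (hℬ : ∀ A ∈ 𝒜, (membersNear d (ℬ A) r x).encard ≤ n) :
    (membersNear d (coverRefinement 𝒜 ℬ) r x).encard ≤ k * n := by
  have hsub : membersNear d (coverRefinement 𝒜 ℬ) r x ⊆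
      ⋃ A ∈ membersNear d 𝒜 r x, (A ∩ ·) '' membersNear d (ℬ A) r x := by
    rintro _ ⟨⟨A, hA, B, hB, rfl⟩, y, hy, hxy⟩
    exact mem_biUnion ⟨hA, y, hy.1, hxy⟩ ⟨B, ⟨hB, y, hy.2, hxy⟩, rfl⟩
  calc _ ≤ _ := encard_le_encard hsub
    _ ≤ (membersNear d 𝒜 r x).encard * n :=
      (finite_of_encard_le_coe h𝒜).encard_biUnion_le_mul fun A hA =>
        (encard_image_le _ _).trans (hℬ A hA.1)
    _ ≤ k * n := by gcongr

end Covers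

section LeftTranslates

variable {G : Type*} [Group G] {P : G → Prop}

def leftTranslates (h : G) (𝒱 : Set (Set {g // P g})) : Set (Set G) :=
  (fun V => h • (Subtype.val '' V)) '' 𝒱

theorem mem_sUnion_leftTranslates {𝒱 : Set (Set {g // P g})} (h𝒱 : ⋃₀ 𝒱 = univ) {h g : G}
    (hg : P (h⁻¹ * g)) : g ∈ ⋃₀ leftTranslates h 𝒱 := by
  obtain ⟨V, hV, hgV⟩ := mem_sUnion.1 (h𝒱 ▸ mem_univ (⟨h⁻¹ * g, hg⟩ : {g // P g}))
  exact ⟨_, ⟨V, hV, rfl⟩, _, ⟨_, hgV, rfl⟩, mul_inv_cancel_left h g⟩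

variable {d : G → G → ℝ} (hinv : ∀ h a b, d (h * a) (h * b) = d a b)
include hinv

theorem leftTranslates_bounded {𝒱 : Set (Set {g // P g})} {D : ℝ}
    (h𝒱 : ∀ V ∈ 𝒱, ∀ a ∈ V, ∀ b ∈ V, d a b ≤ D) (h : G) :
    ∀ B ∈ leftTranslates h 𝒱, ∀ a ∈ B, ∀ b ∈ B, d a b ≤ D := by
  rintro _ ⟨V, hV, rfl⟩ _ ⟨_, ⟨a, ha, rfl⟩, rfl⟩ _ ⟨_, ⟨b, hb, rfl⟩, rfl⟩
  exact (hinv h a b).trans_le (h𝒱 V hV a ha b hb)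

theorem encard_membersNear_leftTranslates_le (hsymm : ∀ a b, d a b = d b a)
    (htri : ∀ a b c, d a c ≤ d a b + d b c) {𝒱 : Set (Set {g // P g})} {r : ℝ} {n : ℕ∞}
    (h𝒱 : ∀ v, (membersNear (fun a b : {g // P g} => d a b) 𝒱 (2 * r) v).encard ≤ n)
    (h g : G) : (membersNear d (leftTranslates h 𝒱) r g).encard ≤ n := by
  rcases (membersNear d (leftTranslates h 𝒱) r g).eq_empty_or_nonempty with hempty | hne
  · simp [hempty]
  obtain ⟨_, ⟨⟨V₀, -, rfl⟩, _, ⟨_, ⟨v₀, -, rfl⟩, rfl⟩, hv₀⟩⟩ := hne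
  have hsub : membersNear d (leftTranslates h 𝒱) r g ⊆
      (fun V => h • (Subtype.val '' V)) ''
        membersNear (fun a b : {g // P g} => d a b) 𝒱 (2 * r) v₀ := by
    rintro _ ⟨⟨V, hV, rfl⟩, _, ⟨_, ⟨w, hw, rfl⟩, rfl⟩, hw'⟩
    refine ⟨V, ⟨hV, w, hw, ?_⟩, rfl⟩
    calc d v₀ w = d (h * v₀) (h * w) := (hinv h v₀ w).symm
      _ ≤ d (h * v₀) g + d g (h * w) := htri _ _ _
      _ ≤ 2 * r := by rw [hsymm] at hv₀; simp only [smul_eq_mul] at hv₀ hw'; linarith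
  exact (encard_le_encard hsub).trans ((encard_image_le _ _).trans (h𝒱 v₀))

end LeftTranslates

section IsometricAction

variable {G M : Type*} [Group G] [PseudoMetricSpace M] [MulAction G M] [IsIsometricSMul G M]

theorem dist_smul_smul_eq_dist_inv_mul_smul (x : M) (a b : G) :
    dist (a • x) (b • x) = dist x ((a⁻¹ * b) • x) := by
  rw [← dist_smul a⁻¹, inv_smul_smul, smul_smul]

theorem AsdimLEWith.of_isIsometricSMul {d : G → G → ℝ}
    (hinv : ∀ h a b, d (h * a) (h * b) = d a b) (hsymm : ∀ a b, d a b = d b a)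
    (htri : ∀ a b c, d a c ≤ d a b + d b c) (x : M)
    (horbit : ∀ r, ∃ r', ∀ a b, d a b ≤ r → dist (a • x) (b • x) ≤ r') {k n : ℕ}
    (hM : AsdimLEWith (fun a b : M => dist a b) k)
    (hW : ∀ R : ℝ, 0 ≤ R →
      AsdimLEWith (fun a b : {g : G // dist x (g • x) ≤ R} => d a b) n) :
    AsdimLEWith d ((k + 1) * (n + 1) - 1) := by
  rw [asdimLEWith_iff] at hM ⊢
  intro r hr
  obtain ⟨r', hr'⟩ := horbit r
  obtain ⟨𝒰, D, h𝒰cov, h𝒰bdd, h𝒰mult⟩ := hM (max r' 1) (by positivity)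
  obtain ⟨𝒱, E, h𝒱cov, h𝒱bdd, h𝒱mult⟩ :=
    (asdimLEWith_iff _).1 (hW (max D 0) (le_max_right _ _)) (2 * r) (by positivity)
  let 𝒜 : Set (Set G) := preimage (· • x) '' 𝒰
  let c : Set G → G := fun A => Classical.epsilon (· ∈ A)
  have hc : ∀ A ∈ 𝒜, ∀ g ∈ A, dist x (((c A)⁻¹ * g) • x) ≤ max D 0 := by
    rintro _ ⟨U, hU, rfl⟩ g hg
    rw [← dist_smul_smul_eq_dist_inv_mul_smul]
    exact (h𝒰bdd U hU _ (Classical.epsilon_spec ⟨g, hg⟩) _ hg).trans (le_max_left _ _)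
  have h𝒜cov : ⋃₀ 𝒜 = univ := by
    rw [sUnion_image, ← preimage_sUnion, h𝒰cov, preimage_univ]
  have h𝒜mult (g : G) : (membersNear d 𝒜 r g).encard ≤ (k + 1 : ℕ) := by
    refine (encard_le_encard (membersNear_preimage_subset (e := dist) (r' := max r' 1)
      (fun a b hab => (hr' a b hab).trans (le_max_left _ _)) 𝒰 g)).trans ?_
    exact (encard_image_le _ _).trans (by simpa using h𝒰mult (g • x))
  refine ⟨coverRefinement 𝒜 (fun A => leftTranslates (c A) 𝒱), E,
    sUnion_coverRefinement h𝒜cov fun A hA g hg =>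
      mem_sUnion_leftTranslates h𝒱cov (hc A hA g hg),
    coverRefinement_bounded fun A _ => leftTranslates_bounded hinv h𝒱bdd (c A), fun g => ?_⟩
  calc _ ≤ ((k + 1 : ℕ) : ℕ∞) * (n + 1) :=
        encard_membersNear_coverRefinement_le (h𝒜mult g) fun A _ =>
          encard_membersNear_leftTranslates_le hinv hsymm htri h𝒱mult (c A) g
    _ = _ := by norm_cast

end IsometricAction

section WordMetric

variable {G : Type*} [Group G] {S : Set G}

theorem Submonoid.closure_eq_top_of_inv_mem (hsym : ∀ s ∈ S, s⁻¹ ∈ S)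
    (hgen : Subgroup.closure S = ⊤) : Submonoid.closure S = ⊤ := by
  have hS : S ∪ S⁻¹ = S := union_eq_left.2 fun s hs => by simpa using hsym _ hs
  rw [← hS, ← Subgroup.closure_toSubmonoid, hgen, Subgroup.top_toSubmonoid]

theorem wordLength_le_length {l : List G} (hl : ∀ s ∈ l, s ∈ S) :
    wordLength S l.prod ≤ l.length :=
  Nat.sInf_le ⟨l, rfl, hl, rfl⟩

theorem wordDist_mul_left (S : Set G) (h a b : G) :
    wordDist S (h * a) (h * b) = wordDist S a b := by
  rw [wordDist, wordDist, mul_inv_rev, mul_assoc, inv_mul_cancel_left]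

variable (hS : Submonoid.closure S = ⊤)
include hS

theorem exists_list_length_eq_wordLength (g : G) :
    ∃ l : List G, l.length = wordLength S g ∧ (∀ s ∈ l, s ∈ S) ∧ l.prod = g := by
  obtain ⟨l, hl, hprod⟩ := Submonoid.exists_list_of_mem_closure (hS ▸ Submonoid.mem_top g)
  exact Nat.sInf_mem (s := {n | ∃ l : List G, l.length = n ∧ (∀ s ∈ l, s ∈ S) ∧ l.prod = g})
    ⟨l.length, l, rfl, hl, hprod⟩

theorem wordLength_mul_le (a b : G) :
    wordLength S (a * b) ≤ wordLength S a + wordLength S b := by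
  obtain ⟨la, hla, hSa, rfl⟩ := exists_list_length_eq_wordLength hS a
  obtain ⟨lb, hlb, hSb, rfl⟩ := exists_list_length_eq_wordLength hS b
  rw [← hla, ← hlb, ← List.length_append, ← List.prod_append]
  exact wordLength_le_length fun s hs => (List.mem_append.1 hs).elim (hSa s) (hSb s)

theorem wordLength_inv_le (hsym : ∀ s ∈ S, s⁻¹ ∈ S) (g : G) :
    wordLength S g⁻¹ ≤ wordLength S g := by
  obtain ⟨l, hl, hSl, rfl⟩ := exists_list_length_eq_wordLength hS g
  rw [← hl, List.prod_inv_reverse, ← List.length_map (f := fun s => s⁻¹), ← List.length_reverse]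
  refine wordLength_le_length fun s hs => ?_
  obtain ⟨t, ht, rfl⟩ := List.mem_map.1 (List.mem_reverse.1 hs)
  exact hsym t (hSl t ht)

theorem wordDist_comm (hsym : ∀ s ∈ S, s⁻¹ ∈ S) (a b : G) :
    wordDist S a b = wordDist S b a := by
  have key (a b : G) : wordDist S a b ≤ wordDist S b a := by
    simpa [wordDist] using wordLength_inv_le hS hsym (b⁻¹ * a)
  exact (key a b).antisymm (key b a)

theorem wordDist_triangle (a b c : G) :
    wordDist S a c ≤ wordDist S a b + wordDist S b c := by
  have h : a⁻¹ * c = (a⁻¹ * b) * (b⁻¹ * c) := by group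
  simp only [wordDist, h]
  exact_mod_cast wordLength_mul_le hS _ _

variable {M : Type*} [PseudoMetricSpace M] [MulAction G M] [IsIsometricSMul G M]

omit hS in
theorem dist_list_prod_smul_le {x : M} {C : ℝ} (hC : ∀ s ∈ S, dist x (s • x) ≤ C) {l : List G}
    (hl : ∀ s ∈ l, s ∈ S) :
    dist x (l.prod • x) ≤ C * l.length := by
  induction l with
  | nil => simp
  | cons s t ih =>
    rw [List.prod_cons, mul_smul, List.length_cons, Nat.cast_succ]
    calc dist x (s • t.prod • x) ≤ dist x (s • x) + dist (s • x) (s • t.prod • x) :=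
          dist_triangle _ _ _
      _ ≤ C + C * t.length := by
        rw [dist_smul]
        exact add_le_add (hC s (hl s List.mem_cons_self))
          (ih fun a ha => hl a (List.mem_cons_of_mem _ ha))
      _ = C * (t.length + 1) := by ring

theorem dist_smul_le_mul_wordLength {x : M} {C : ℝ} (hC : ∀ s ∈ S, dist x (s • x) ≤ C) (g : G) :
    dist x (g • x) ≤ C * wordLength S g := by
  obtain ⟨l, hl, hSl, rfl⟩ := exists_list_length_eq_wordLength hS g
  rw [← hl]
  exact dist_list_prod_smul_le hC hSl

theorem exists_dist_smul_smul_le_of_wordDist_le (hfin : S.Finite) (x : M) (r : ℝ) :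
    ∃ r', ∀ a b, wordDist S a b ≤ r → dist (a • x) (b • x) ≤ r' := by
  obtain ⟨C, hC⟩ := (hfin.image fun s => dist x (s • x)).bddAbove
  refine ⟨max C 0 * r, fun a b hab => ?_⟩
  rw [dist_smul_smul_eq_dist_inv_mul_smul]
  calc _ ≤ max C 0 * wordLength S (a⁻¹ * b) :=
        dist_smul_le_mul_wordLength hS
          (fun s hs => (hC ⟨s, hs, rfl⟩).trans (le_max_left _ _)) _
    _ ≤ max C 0 * r := by gcongr; exact hab

end WordMetric

theorem asdim_le_of_isometric_action_general {G M : Type*} [Group G] [PseudoMetricSpace M]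
    [MulAction G M] (hiso : ∀ g : G, Isometry (fun y : M => g • y))
    (X : Finset G) (hsym : ∀ x ∈ X, x⁻¹ ∈ X)
    (hgen : Subgroup.closure (X : Set G) = ⊤)
    (m n : ℕ)
    (hM : AsdimLEWith (fun a b : M => dist a b) (m - 1))
    (x : M)
    (hW : ∀ R : ℝ, 0 ≤ R →
      AsdimLEWith
        (fun a b : {g : G // dist x (g • x) ≤ R} => wordDist (X : Set G) (a : G) (b : G)) n) :
    AsdimLEWith (wordDist (X : Set G)) ((m + 1) * (n + 1) - 1) := by
  have : IsIsometricSMul G M := ⟨hiso⟩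
  have hS := Submonoid.closure_eq_top_of_inv_mem hsym hgen
  refine AsdimLEWith.mono _ (AsdimLEWith.of_isIsometricSMul (wordDist_mul_left _)
    (wordDist_comm hS hsym) (wordDist_triangle hS) x
    (exists_dist_smul_smul_le_of_wordDist_le hS X.finite_toSet x) hM hW) ?_
  gcongr
  omega

/-- Bell–Dranishnikov: if a finitely generated group `G` acts by isometries on a metric
space `M` with `asdim M < m`, and for some `x ∈ M` every `R`-quasi-stabilizer
`W_R(x) = {g : dist x (g • x) ≤ R}` has `asdim ≤ n`, then `asdim G ≤ (m+1)(n+1) - 1`. -/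
theorem asdim_le_of_isometric_action {G M : Type*} [Group G] [PseudoMetricSpace M]
    [MulAction G M] (hiso : ∀ g : G, Isometry (fun y : M => g • y))
    (X : Finset G) (hsym : ∀ x ∈ X, x⁻¹ ∈ X)
    (hgen : Subgroup.closure (X : Set G) = ⊤)
    (m n : ℕ) (hm : 0 < m)
    (hM : AsdimLEWith (fun a b : M => dist a b) (m - 1))
    (x : M)
    (hW : ∀ R : ℝ, 0 ≤ R →
      AsdimLEWith
        (fun a b : {g : G // dist x (g • x) ≤ R} => wordDist (X : Set G) (a : G) (b : G)) n) :
    AsdimLEWith (wordDist (X : Set G)) ((m + 1) * (n + 1) - 1) :=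
  asdim_le_of_isometric_action_general hiso X hsym hgen m n hM x hW
end

section
/- The group ℤᵐ with the word metric from the standard generating set (equivalently, the ℓ¹ or sup metric on ℤᵐ) has asymptotic dimension at most m. -/
namespace AsdimAux

variable {m : ℕ}


/-- Scaled hat function for the Kuhn triangulation of `ℝ^m`, at vertex `L • v`. -/
def H (L : ℤ) (v x : Fin m → ℤ) : ℤ :=
  L - (Finset.univ.sup fun i => (x i - L * v i).toNat)
    - (Finset.univ.sup fun i => (L * v i - x i).toNat)

lemma cast_sup_le (f : Fin m → ℕ) {B : ℤ} (hB : 0 ≤ B) (h : ∀ i, (f i : ℤ) ≤ B) :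
    ((Finset.univ.sup f : ℕ) : ℤ) ≤ B := by
  have h2 : Finset.univ.sup f ≤ B.toNat := Finset.sup_le fun i _ => by have := h i; omega
  omega

lemma le_cast_sup (f : Fin m → ℕ) (i : Fin m) :
    (f i : ℤ) ≤ ((Finset.univ.sup f : ℕ) : ℤ) := by
  exact_mod_cast Finset.le_sup (Finset.mem_univ i)

lemma H_pos_bounds {L : ℤ} {v x : Fin m → ℤ} (hH : 0 < H L v x) (i : Fin m) :
    x i - L * v i < L ∧ L * v i - x i < L := by
  have h1 := le_cast_sup (fun i => (x i - L * v i).toNat) i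
  have h2 := le_cast_sup (fun i => (L * v i - x i).toNat) i
  have h3 := Int.self_le_toNat (x i - L * v i)
  have h4 := Int.self_le_toNat (L * v i - x i)
  have h5 : (0:ℤ) ≤ (Finset.univ.sup fun i => (x i - L * v i).toNat : ℕ) := Int.natCast_nonneg _
  have h6 : (0:ℤ) ≤ (Finset.univ.sup fun i => (L * v i - x i).toNat : ℕ) := Int.natCast_nonneg _
  unfold H at hH
  constructor <;> linarith

/-- Key chain property: two cells with positive hat value at `x` and the same coordinate
sum coincide. -/
lemma H_inj {L : ℤ} (hL : 0 < L) {x v w : Fin m → ℤ}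
    (hv : 0 < H L v x) (hw : 0 < H L w x) (hs : ∑ i, v i = ∑ i, w i) : v = w := by
  by_contra hne
  have hex : ∃ i, v i ≠ w i := by
    by_contra h; push_neg at h; exact hne (funext h)
  -- extract i with w i < v i
  have hgt : ∃ i, w i < v i := by
    by_contra h; push_neg at h
    obtain ⟨i0, hi0⟩ := hex
    have : ∑ i, v i < ∑ i, w i :=
      Finset.sum_lt_sum (fun i _ => h i) ⟨i0, Finset.mem_univ i0, lt_of_le_of_ne (h i0) hi0⟩
    omega
  have hlt : ∃ j, v j < w j := by
    by_contra h; push_neg at h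
    obtain ⟨i0, hi0⟩ := hex
    have : ∑ i, w i < ∑ i, v i :=
      Finset.sum_lt_sum (fun i _ => h i) ⟨i0, Finset.mem_univ i0, lt_of_le_of_ne (h i0) (Ne.symm hi0)⟩
    omega
  obtain ⟨i, hi⟩ := hgt
  obtain ⟨j, hj⟩ := hlt
  -- from hv : (x j - L v j) + (L v i - x i) < L
  have A1 : x j - L * v j ≤ ((Finset.univ.sup fun k => (x k - L * v k).toNat : ℕ) : ℤ) :=
    le_trans (Int.self_le_toNat _) (le_cast_sup _ j)
  have A2 : L * v i - x i ≤ ((Finset.univ.sup fun k => (L * v k - x k).toNat : ℕ) : ℤ) :=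
    le_trans (Int.self_le_toNat _) (le_cast_sup _ i)
  have B1 : x i - L * w i ≤ ((Finset.univ.sup fun k => (x k - L * w k).toNat : ℕ) : ℤ) :=
    le_trans (Int.self_le_toNat _) (le_cast_sup _ i)
  have B2 : L * w j - x j ≤ ((Finset.univ.sup fun k => (L * w k - x k).toNat : ℕ) : ℤ) :=
    le_trans (Int.self_le_toNat _) (le_cast_sup _ j)
  unfold H at hv hw
  have hvi : L * (w i + 1) ≤ L * v i := mul_le_mul_of_nonneg_left (by omega) hL.le
  have hwj : L * (v j + 1) ≤ L * w j := mul_le_mul_of_nonneg_left (by omega) hL.le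
  rw [mul_add, mul_one] at hvi hwj
  linarith

/-- Each cell with positive hat value at `x` has coordinates pinned to two values. -/
lemma H_pos_div {L : ℤ} (hL : 0 < L) {v x : Fin m → ℤ} (hH : 0 < H L v x) (i : Fin m) :
    x i / L ≤ v i ∧ v i ≤ x i / L + 1 := by
  have h1 := le_cast_sup (fun k => (x k - L * v k).toNat) i
  have h2 := le_cast_sup (fun k => (L * v k - x k).toNat) i
  have h3 := Int.self_le_toNat (x i - L * v i)
  have h4 := Int.self_le_toNat (L * v i - x i)
  have h5 : (0:ℤ) ≤ (Finset.univ.sup fun k => (x k - L * v k).toNat : ℕ) := Int.natCast_nonneg _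
  have h6 : (0:ℤ) ≤ (Finset.univ.sup fun k => (L * v k - x k).toNat : ℕ) := Int.natCast_nonneg _
  unfold H at hH
  have hub : x i - L * v i < L := by linarith
  have hlb : L * v i - x i < L := by linarith
  have he : L * (x i / L) + x i % L = x i := Int.mul_ediv_add_emod (x i) L
  have ht0 : 0 ≤ x i % L := Int.emod_nonneg (x i) hL.ne'
  have ht1 : x i % L < L := Int.emod_lt_of_pos (x i) hL
  constructor
  · by_contra h; push_neg at h
    have : L * (v i + 1) ≤ L * (x i / L) := mul_le_mul_of_nonneg_left (by omega) hL.le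
    rw [mul_add, mul_one] at this
    linarith
  · by_contra h; push_neg at h
    have : L * (x i / L + 1 + 1) ≤ L * v i := mul_le_mul_of_nonneg_left (by omega) hL.le
    rw [mul_add, mul_add, mul_one] at this
    linarith

lemma V_finite_card {L : ℤ} (hL : 0 < L) (x : Fin m → ℤ) :
    {v : Fin m → ℤ | 0 < H L v x}.Finite ∧
      {v : Fin m → ℤ | 0 < H L v x}.ncard ≤ m + 1 := by
  set V := {v : Fin m → ℤ | 0 < H L v x} with hV
  set f : (Fin m → ℤ) → ℤ := fun v => ∑ i, v i with hf
  have hinj : Set.InjOn f V := fun v hv w hw h => H_inj hL hv hw h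
  set S : ℤ := ∑ i, x i / L with hS
  have hsub : f '' V ⊆ ↑(Finset.Icc S (S + m)) := by
    rintro s ⟨v, hv, rfl⟩
    simp only [Finset.coe_Icc, Set.mem_Icc]
    constructor
    · exact Finset.sum_le_sum fun i _ => (H_pos_div hL hv i).1
    · calc ∑ i, v i ≤ ∑ i, (x i / L + 1) := Finset.sum_le_sum fun i _ => (H_pos_div hL hv i).2
        _ = S + m := by
          rw [Finset.sum_add_distrib, Finset.sum_const, Finset.card_univ, Fintype.card_fin]
          simp [hS]
  have himfin : (f '' V).Finite := Set.Finite.subset (Finset.finite_toSet _) hsub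
  have hfin : V.Finite := Set.Finite.of_finite_image himfin hinj
  refine ⟨hfin, ?_⟩
  calc V.ncard = (f '' V).ncard := (Set.ncard_image_of_injOn hinj).symm
    _ ≤ (↑(Finset.Icc S (S + m)) : Set ℤ).ncard :=
        Set.ncard_le_ncard hsub (Finset.finite_toSet _)
    _ = m + 1 := by
        rw [Set.ncard_coe_finset, Int.card_Icc]
        omega

/-- Lipschitz property of hat functions w.r.t. ℓ¹ distance. -/
lemma H_lip (L : ℤ) (v x y : Fin m → ℤ) :
    H L v y - 2 * ∑ i, |x i - y i| ≤ H L v x := by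
  set σ : ℤ := ∑ i, |x i - y i| with hσdef
  have hσ0 : 0 ≤ σ := Finset.sum_nonneg fun i _ => abs_nonneg _
  have hσi : ∀ i, |x i - y i| ≤ σ := by
    intro i
    rw [hσdef]
    exact Finset.single_le_sum (f := fun k => |x k - y k|) (fun k _ => abs_nonneg _) (Finset.mem_univ i)
  have key : ∀ a b : ℤ, (a.toNat : ℤ) ≤ (b.toNat : ℤ) + |a - b| := by
    intro a b; rw [Int.abs_eq_natAbs]; omega
  have hn1 : (0:ℤ) ≤ ((Finset.univ.sup fun i => (y i - L * v i).toNat : ℕ) : ℤ) :=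
    Int.natCast_nonneg _
  have hn2 : (0:ℤ) ≤ ((Finset.univ.sup fun i => (L * v i - y i).toNat : ℕ) : ℤ) :=
    Int.natCast_nonneg _
  have h1 : ((Finset.univ.sup fun i => (x i - L * v i).toNat : ℕ) : ℤ) ≤
      ((Finset.univ.sup fun i => (y i - L * v i).toNat : ℕ) : ℤ) + σ := by
    refine cast_sup_le _ (by linarith) fun i => ?_
    have hk := key (x i - L * v i) (y i - L * v i)
    rw [sub_sub_sub_cancel_right] at hk
    have h5 := le_cast_sup (fun i => (y i - L * v i).toNat) i
    have h6 := hσi i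
    linarith
  have h2 : ((Finset.univ.sup fun i => (L * v i - x i).toNat : ℕ) : ℤ) ≤
      ((Finset.univ.sup fun i => (L * v i - y i).toNat : ℕ) : ℤ) + σ := by
    refine cast_sup_le _ (by linarith) fun i => ?_
    have hk := key (L * v i - x i) (L * v i - y i)
    have he : L * v i - x i - (L * v i - y i) = y i - x i := by ring
    rw [he, abs_sub_comm] at hk
    have h5 := le_cast_sup (fun i => (L * v i - y i).toNat) i
    have h6 := hσi i
    linarith
  unfold H
  linarith

/-- Covering: every point has a hat of value at least `K`, where `L = (m+1)K`. -/
lemma H_exists (K : ℕ) (hK : 0 < K) (x : Fin m → ℤ) :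
    ∃ v : Fin m → ℤ, (K : ℤ) ≤ H (((m:ℤ)+1) * K) v x := by
  set L : ℤ := ((m:ℤ)+1) * K with hLdef
  have hKZ : (0:ℤ) < K := by exact_mod_cast hK
  have hL : 0 < L := by positivity
  set t : Fin m → ℤ := fun i => x i % L with ht
  set g : Fin m → ℤ := fun i => t i / K with hg
  have hgdef : ∀ i, g i = t i / K := fun i => rfl
  have ht0 : ∀ i, 0 ≤ t i := fun i => Int.emod_nonneg (x i) hL.ne'
  have ht1 : ∀ i, t i < L := fun i => Int.emod_lt_of_pos (x i) hL
  have hgmem : ∀ i, g i ∈ Finset.Icc (0:ℤ) m := by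
    intro i
    rw [Finset.mem_Icc, hgdef]
    refine ⟨Int.ediv_nonneg (ht0 i) hKZ.le, ?_⟩
    have h1 : t i / (K:ℤ) < (m:ℤ) + 1 :=
      (Int.ediv_lt_iff_lt_mul hKZ).mpr (by rw [← hLdef]; exact ht1 i)
    omega
  have hns : ¬ (Finset.Icc (0:ℤ) (m:ℤ) ⊆ Finset.image g Finset.univ) := by
    intro h
    have hc := Finset.card_le_card h
    have h1 : (Finset.image g Finset.univ).card ≤ m := by
      have h2 := Finset.card_image_le (f := g) (s := (Finset.univ : Finset (Fin m)))
      simpa using h2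
    rw [Int.card_Icc] at hc
    omega
  obtain ⟨j, hjmem, hjnot⟩ := Finset.not_subset.mp hns
  rw [Finset.mem_Icc] at hjmem
  have hjne : ∀ i, g i ≠ j := by
    intro i h
    exact hjnot (Finset.mem_image.mpr ⟨i, Finset.mem_univ i, h⟩)
  refine ⟨fun i => x i / L + (if j < g i then 1 else 0), ?_⟩
  set v : Fin m → ℤ := fun i => x i / L + (if j < g i then 1 else 0) with hv
  have hxi : ∀ i, L * (x i / L) + t i = x i := fun i => Int.mul_ediv_add_emod (x i) L
  have hd1 : ∀ i, j < g i → x i - L * v i = t i - L := by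
    intro i h
    have h1 := hxi i
    have h2 : v i = x i / L + 1 := by simp [hv, h]
    rw [h2, mul_add, mul_one]
    linarith
  have hd2 : ∀ i, ¬ j < g i → x i - L * v i = t i := by
    intro i h
    have h1 := hxi i
    have h2 : v i = x i / L := by simp [hv, h]
    rw [h2]
    linarith
  have hjK0 : (0:ℤ) ≤ j * K := mul_nonneg hjmem.1 hKZ.le
  have hjK : (j + 1) * K ≤ L := by
    rw [hLdef]
    exact mul_le_mul_of_nonneg_right (by omega) hKZ.le
  have hB1 : ((Finset.univ.sup fun i => (x i - L * v i).toNat : ℕ) : ℤ) ≤ j * K := by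
    refine cast_sup_le _ hjK0 fun i => ?_
    by_cases h : j < g i
    · rw [hd1 i h, Int.toNat_of_nonpos (by have := ht1 i; linarith)]
      simpa using hjK0
    · rw [hd2 i h, Int.toNat_of_nonneg (ht0 i)]
      have hji : g i < j := lt_of_le_of_ne (not_lt.mp h) (hjne i)
      rw [hgdef] at hji
      have h3 : t i < j * K := (Int.ediv_lt_iff_lt_mul hKZ).mp hji
      linarith
  have hB2 : ((Finset.univ.sup fun i => (L * v i - x i).toNat : ℕ) : ℤ) ≤ L - (j + 1) * K := by
    refine cast_sup_le _ (by linarith) fun i => ?_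
    by_cases h : j < g i
    · have hdi : L * v i - x i = L - t i := by have := hd1 i h; linarith
      rw [hdi, Int.toNat_of_nonneg (by have := ht1 i; linarith)]
      have hji : j + 1 ≤ t i / K := by have := h; rw [hgdef] at this; omega
      have h3 : (j + 1) * K ≤ t i := (Int.le_ediv_iff_mul_le hKZ).mp hji
      linarith
    · have hdi : L * v i - x i = - t i := by have := hd2 i h; linarith
      rw [hdi, Int.toNat_of_nonpos (by have := ht0 i; linarith)]
      simp only [Nat.cast_zero]
      linarith
  unfold H
  have hfin : L - j * K - (L - (j + 1) * K) = (K:ℤ) := by ring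
  linarith


end AsdimAux

/-- `ℤ^m` with the `ℓ¹` metric (the word metric from the standard generating set) has
asymptotic dimension at most `m`. -/
theorem asdim_zpow_le (m : ℕ) :
    AsdimLEWith (fun u v : Fin m → ℤ => ((∑ i, |u i - v i| : ℤ) : ℝ)) m := by
  intro r hr
  set K : ℕ := ⌊2*r⌋₊ + 1 with hKdef
  have hKpos : 0 < K := Nat.succ_pos _
  have hKr : 2*r < (K:ℝ) := by
    have h := Nat.lt_floor_add_one (2*r)
    rw [hKdef]
    push_cast
    linarith
  set L : ℤ := ((m:ℤ)+1) * K with hLdef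
  have hL : 0 < L := by positivity
  refine ⟨Set.range (fun v : Fin m → ℤ => {x | (K:ℤ) ≤ AsdimAux.H L v x}),
    2*(m:ℝ)*(L:ℝ), ?_, ?_, ?_⟩
  · -- the sets cover everything
    ext x
    simp only [Set.mem_sUnion, Set.mem_univ, iff_true]
    obtain ⟨v, hv⟩ := AsdimAux.H_exists K hKpos x
    rw [← hLdef] at hv
    exact ⟨_, ⟨v, rfl⟩, hv⟩
  · -- uniformly bounded
    rintro U ⟨v, rfl⟩ a ha b hb
    simp only [Set.mem_setOf_eq] at ha hb
    have hKZ : (0:ℤ) < K := by exact_mod_cast hKpos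
    have hpa := AsdimAux.H_pos_bounds (lt_of_lt_of_le hKZ ha)
    have hpb := AsdimAux.H_pos_bounds (lt_of_lt_of_le hKZ hb)
    have hsum : ∑ i, |a i - b i| ≤ (m:ℤ) * (2*L) := by
      calc ∑ i, |a i - b i| ≤ ∑ _i : Fin m, 2*L := by
            refine Finset.sum_le_sum fun i _ => ?_
            have h1 := (hpa i).1
            have h2 := (hpa i).2
            have h3 := (hpb i).1
            have h4 := (hpb i).2
            rw [abs_le]
            constructor <;> linarith
        _ = (m:ℤ) * (2*L) := by
            rw [Finset.sum_const, Finset.card_univ, Fintype.card_fin]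
            ring
    show ((∑ i, |a i - b i| : ℤ) : ℝ) ≤ 2*(m:ℝ)*(L:ℝ)
    have hc : ((∑ i, |a i - b i| : ℤ):ℝ) ≤ (((m:ℤ) * (2*L) : ℤ):ℝ) := by exact_mod_cast hsum
    push_cast at hc ⊢
    linarith
  · -- multiplicity at most m + 1
    intro x
    obtain ⟨hVfin, hVcard⟩ := AsdimAux.V_finite_card (m := m) hL x
    have hsub : {U | U ∈ Set.range (fun v : Fin m → ℤ => {x | (K:ℤ) ≤ AsdimAux.H L v x}) ∧
        ∃ y ∈ U, ((∑ i, |x i - y i| : ℤ):ℝ) ≤ r} ⊆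
        (fun v : Fin m → ℤ => {x | (K:ℤ) ≤ AsdimAux.H L v x}) ''
          {v : Fin m → ℤ | 0 < AsdimAux.H L v x} := by
      rintro U ⟨⟨v, rfl⟩, y, hy, hd⟩
      refine ⟨v, ?_, rfl⟩
      simp only [Set.mem_setOf_eq] at hy ⊢
      have hd' : ((∑ i, |x i - y i| : ℤ):ℝ) ≤ r := hd
      have h2σ : 2 * (∑ i, |x i - y i|) < (K:ℤ) := by
        have hc : ((2 * ∑ i, |x i - y i| : ℤ):ℝ) < (K:ℝ) := by
          have h1 : ((2 * ∑ i, |x i - y i| : ℤ):ℝ) = 2 * ((∑ i, |x i - y i| : ℤ):ℝ) := by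
            push_cast
            ring
          rw [h1]
          linarith
        exact_mod_cast hc
      have hlip := AsdimAux.H_lip L v x y
      linarith
    constructor
    · exact ((hVfin.image _).subset hsub)
    · calc {U | U ∈ Set.range (fun v : Fin m → ℤ => {x | (K:ℤ) ≤ AsdimAux.H L v x}) ∧
            ∃ y ∈ U, ((∑ i, |x i - y i| : ℤ):ℝ) ≤ r}.ncard
          ≤ ((fun v : Fin m → ℤ => {x | (K:ℤ) ≤ AsdimAux.H L v x}) ''
              {v : Fin m → ℤ | 0 < AsdimAux.H L v x}).ncard :=
            Set.ncard_le_ncard hsub (hVfin.image _)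
        _ ≤ ({v : Fin m → ℤ | 0 < AsdimAux.H L v x}).ncard := Set.ncard_image_le hVfin
        _ ≤ m + 1 := hVcard
end
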